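/- There is a well-defined ℂ-algebra homomorphism φ from A₁ to U(sl₂(ℂ))/I with φ(x) equal to the class of ι(h) and φ(y) equal to the class of ι(e); the image of φ is the ℂ-linear span of the classes of 1, ι(e), ι(h), and ι(f)·ι(e), which is a four-dimensional unital subalgebra of U(sl₂(ℂ))/I. -/

import Mathlib

open LieAlgebra.SpecialLinear

/-- The generator `x` in the free algebra on two generators. -/
noncomputable def Xgen : FreeAlgebra ℂ (Fin 2) := FreeAlgebra.ι ℂ 0

/-- The generator `y` in the free algebra on two generators. -/
noncomputable def Ygen : FreeAlgebra ℂ (Fin 2) := FreeAlgebra.ι ℂ 1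

/-- The defining relations of `A₁`: `y·y = 0`, `y·x = -y`, `x·y = y`. -/
inductive relA1 : FreeAlgebra ℂ (Fin 2) → FreeAlgebra ℂ (Fin 2) → Prop
  | yy : relA1 (Ygen * Ygen) 0
  | yx : relA1 (Ygen * Xgen) (-Ygen)
  | xy : relA1 (Xgen * Ygen) Ygen

/-- The algebra `A₁`: quotient of the free associative unital `ℂ`-algebra on `x, y`
by the two-sided ideal generated by `y·y`, `y·x + y`, `x·y − y`. -/
noncomputable abbrev A1 := RingQuot relA1

/-- The image of the generator `x` in `A₁`. -/
noncomputable def xA1 : A1 := RingQuot.mkAlgHom ℂ relA1 Xgen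

/-- The image of the generator `y` in `A₁`. -/
noncomputable def yA1 : A1 := RingQuot.mkAlgHom ℂ relA1 Ygen

/-- The standard basis element `e = E₁₂` of `sl₂(ℂ)`. -/
noncomputable def Esl : sl (Fin 2) ℂ := single 0 1 (by decide) (1 : ℂ)

/-- The standard basis element `f = E₂₁` of `sl₂(ℂ)`. -/
noncomputable def Fsl : sl (Fin 2) ℂ := single 1 0 (by decide) (1 : ℂ)

/-- The standard basis element `h = E₁₁ − E₂₂` of `sl₂(ℂ)`. -/
noncomputable def Hsl : sl (Fin 2) ℂ :=
  ⟨Matrix.single 0 0 1 - Matrix.single 1 1 1,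
    show _ ∈ LinearMap.ker (Matrix.traceLinearMap (Fin 2) ℂ ℂ) by
      rw [LinearMap.mem_ker, map_sub]
      simp [Matrix.traceLinearMap, Matrix.trace_single_eq_same]⟩

/-- The universal enveloping algebra of `sl₂(ℂ)`. -/
noncomputable abbrev Usl2 := UniversalEnvelopingAlgebra ℂ (sl (Fin 2) ℂ)

attribute [local instance 100] LieRing.ofAssociativeRing

/-- The canonical map `ι : sl₂(ℂ) → U(sl₂(ℂ))`. -/
noncomputable def iotaU : sl (Fin 2) ℂ →ₗ⁅ℂ⁆ Usl2 := UniversalEnvelopingAlgebra.ι ℂ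

/-- The relation identifying `ι(e)²` with `0`; the associated `RingQuot` is the quotient
of `U(sl₂(ℂ))` by the two-sided ideal `I` generated by `ι(e)²`. -/
inductive relE : Usl2 → Usl2 → Prop
  | ee : relE (iotaU Esl * iotaU Esl) 0

/-- The quotient algebra `U(sl₂(ℂ))/I`. -/
noncomputable abbrev Qsl2 := RingQuot relE

/-- The quotient map `U(sl₂(ℂ)) → U(sl₂(ℂ))/I`. -/
noncomputable def qmap : Usl2 →ₐ[ℂ] Qsl2 := RingQuot.mkAlgHom ℂ relE

lemma iadd (a b : sl (Fin 2) ℂ) : iotaU (a + b) = iotaU a + iotaU b :=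
  iotaU.toLinearMap.map_add a b

lemma isub (a b : sl (Fin 2) ℂ) : iotaU (a - b) = iotaU a - iotaU b :=
  iotaU.toLinearMap.map_sub a b

lemma ineg (a : sl (Fin 2) ℂ) : iotaU (-a) = -iotaU a :=
  iotaU.toLinearMap.map_neg a

lemma lieEF : ⁅Esl, Fsl⁆ = Hsl := by
  apply Subtype.ext
  rw [sl_bracket]
  simp [Esl, Fsl, Hsl]

lemma lieHE : ⁅Hsl, Esl⁆ = Esl + Esl := by
  apply Subtype.ext
  rw [sl_bracket]
  show _ = (Esl : Matrix (Fin 2) (Fin 2) ℂ) + (Esl : Matrix (Fin 2) (Fin 2) ℂ)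
  simp [Esl, Fsl, Hsl, sub_mul, mul_sub]

lemma lieHF : ⁅Hsl, Fsl⁆ = -Fsl - Fsl := by
  apply Subtype.ext
  rw [sl_bracket]
  show _ = -(Fsl : Matrix (Fin 2) (Fin 2) ℂ) - (Fsl : Matrix (Fin 2) (Fin 2) ℂ)
  simp [Esl, Fsl, Hsl, sub_mul, mul_sub]

noncomputable def EQ : Qsl2 := qmap (iotaU Esl)
noncomputable def FQ : Qsl2 := qmap (iotaU Fsl)
noncomputable def HQ : Qsl2 := qmap (iotaU Hsl)

lemma qEF : EQ * FQ = FQ * EQ + HQ := by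
  have h := iotaU.map_lie Esl Fsl
  rw [lieEF, Ring.lie_def] at h
  have : qmap (iotaU Hsl) = qmap (iotaU Esl * iotaU Fsl - iotaU Fsl * iotaU Esl) := by rw [← h]
  rw [map_sub, map_mul, map_mul] at this
  rw [EQ, FQ, HQ, this]; abel

lemma qHE : HQ * EQ = EQ * HQ + EQ + EQ := by
  have h := iotaU.map_lie Hsl Esl
  rw [lieHE, Ring.lie_def, iadd] at h
  have key : qmap (iotaU Esl) + qmap (iotaU Esl)
      = qmap (iotaU Hsl) * qmap (iotaU Esl) - qmap (iotaU Esl) * qmap (iotaU Hsl) := by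
    rw [← map_mul qmap, ← map_mul qmap, ← map_sub qmap, ← h, map_add qmap]
  rw [EQ, HQ, add_assoc, key]; abel

lemma qHF : HQ * FQ = FQ * HQ - FQ - FQ := by
  have h := iotaU.map_lie Hsl Fsl
  rw [lieHF, Ring.lie_def, isub, ineg] at h
  -- h : -iotaU Fsl - iotaU Fsl = Hu * Fu - Fu * Hu
  have key : qmap (iotaU Hsl) * qmap (iotaU Fsl) - qmap (iotaU Fsl) * qmap (iotaU Hsl)
      = -qmap (iotaU Fsl) - qmap (iotaU Fsl) := by
    rw [← map_mul qmap, ← map_mul qmap, ← map_sub qmap, ← h, map_sub qmap, map_neg qmap]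
  rw [HQ, FQ]
  rw [show qmap (iotaU Hsl) * qmap (iotaU Fsl)
      = (qmap (iotaU Hsl) * qmap (iotaU Fsl) - qmap (iotaU Fsl) * qmap (iotaU Hsl))
        + qmap (iotaU Fsl) * qmap (iotaU Hsl) by abel, key]
  abel

lemma qE2 : EQ * EQ = 0 := by
  rw [EQ, qmap, ← map_mul, RingQuot.mkAlgHom_rel ℂ relE.ee, map_zero]

lemma qHEe : HQ * EQ = EQ := by
  have h0 : EQ * (EQ * FQ) = 0 := by
    rw [← mul_assoc, qE2, zero_mul]
  rw [qEF, mul_add, ← mul_assoc, qEF, add_mul, mul_assoc, qE2, mul_zero, zero_add] at h0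
  -- h0 : HQ * EQ + EQ * HQ = 0
  have h2 : EQ * HQ = HQ * EQ - EQ - EQ := by
    rw [show EQ * HQ = (EQ * HQ + EQ + EQ) - EQ - EQ by abel, ← qHE]
  rw [h2] at h0
  have h3 : HQ * EQ + HQ * EQ = EQ + EQ := by
    rw [show HQ * EQ + HQ * EQ = (HQ * EQ + (HQ * EQ - EQ - EQ)) + EQ + EQ by abel, h0]; abel
  have h1 : (2:ℂ) • (HQ * EQ) = (2:ℂ) • EQ := by
    rw [two_smul, two_smul, h3]
  exact smul_right_injective Qsl2 two_ne_zero h1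

lemma qEH : EQ * HQ = -EQ := by
  have h2 : EQ * HQ = HQ * EQ - EQ - EQ := by
    rw [show EQ * HQ = (EQ * HQ + EQ + EQ) - EQ - EQ by abel, ← qHE]
  rw [h2, qHEe]; abel

lemma qEFE : EQ * (FQ * EQ) = EQ := by
  rw [← mul_assoc, qEF, add_mul, mul_assoc, qE2, mul_zero, zero_add, qHEe]

lemma qHFE : HQ * (FQ * EQ) = -(FQ * EQ) := by
  rw [← mul_assoc, qHF, sub_mul, sub_mul, mul_assoc, qHEe]
  abel

lemma qFEH : (FQ * EQ) * HQ = -(FQ * EQ) := by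
  rw [mul_assoc, qEH, mul_neg]

lemma qFEE : (FQ * EQ) * EQ = 0 := by
  rw [mul_assoc, qE2, mul_zero]

lemma qFEFE : (FQ * EQ) * (FQ * EQ) = FQ * EQ := by
  have h : (FQ * EQ) * (FQ * EQ) = FQ * ((EQ * FQ) * EQ) := by
    rw [mul_assoc, ← mul_assoc EQ FQ EQ]
  rw [h, qEF, add_mul, mul_add, qFEE, qHEe, mul_zero, zero_add]

lemma qHH : HQ * HQ = HQ + (FQ * EQ) + (FQ * EQ) := by
  have h : HQ = EQ * FQ - FQ * EQ := by rw [qEF]; abel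
  nth_rewrite 2 [h]
  rw [mul_sub, qHFE, ← mul_assoc, qHEe, qEF, sub_neg_eq_add]
  abel
noncomputable def fFree : FreeAlgebra ℂ (Fin 2) →ₐ[ℂ] Qsl2 :=
  FreeAlgebra.lift ℂ ![HQ, EQ]

lemma fX : fFree Xgen = HQ := by
  rw [fFree, Xgen, FreeAlgebra.lift_ι_apply]; rfl

lemma fY : fFree Ygen = EQ := by
  rw [fFree, Ygen, FreeAlgebra.lift_ι_apply]; rfl

lemma fRel : ∀ ⦃a b : FreeAlgebra ℂ (Fin 2)⦄, relA1 a b → fFree a = fFree b := by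
  intro a b r
  induction r with
  | yy => rw [map_mul, fY, qE2, map_zero]
  | yx => rw [map_mul, fY, fX, qEH, map_neg, fY]
  | xy => rw [map_mul, fY, fX, qHEe]

noncomputable def phi : A1 →ₐ[ℂ] Qsl2 :=
  RingQuot.liftAlgHom ℂ ⟨fFree, fRel⟩

lemma phi_mk (w : FreeAlgebra ℂ (Fin 2)) :
    phi (RingQuot.mkAlgHom ℂ relA1 w) = fFree w :=
  RingQuot.liftAlgHom_mkAlgHom_apply ℂ fFree fRel w

lemma phiX : phi xA1 = HQ := by rw [xA1, phi_mk, fX]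
lemma phiY : phi yA1 = EQ := by rw [yA1, phi_mk, fY]
noncomputable def rho : sl (Fin 2) ℂ →ₗ⁅ℂ⁆ (Matrix (Fin 2) (Fin 2) ℂ × ℂ) where
  toFun x := (x.val, 0)
  map_add' x y := by simp [Prod.ext_iff]
  map_smul' c x := by simp [Prod.ext_iff]
  map_lie' {x y} := by
    simp only [Ring.lie_def, Prod.mk_mul_mk, Prod.mk_sub_mk, Prod.ext_iff]
    constructor
    · rw [sl_bracket]
    · simp

noncomputable def psi0 : Usl2 →ₐ[ℂ] (Matrix (Fin 2) (Fin 2) ℂ × ℂ) :=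
  UniversalEnvelopingAlgebra.lift ℂ rho

lemma psi0_iota (x : sl (Fin 2) ℂ) : psi0 (iotaU x) = (x.val, 0) := by
  rw [psi0, iotaU, UniversalEnvelopingAlgebra.lift_ι_apply]; rfl

lemma psiRel : ∀ ⦃a b : Usl2⦄, relE a b → psi0 a = psi0 b := by
  intro a b r
  induction r with
  | ee =>
    rw [map_mul, psi0_iota, map_zero, Prod.mk_mul_mk, mul_zero]
    show ((Matrix.single 0 1 (1:ℂ)) * (Matrix.single 0 1 (1:ℂ)), (0:ℂ)) = 0
    have h : Matrix.single (0 : Fin 2) (1 : Fin 2) (1:ℂ)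
        * Matrix.single (0 : Fin 2) (1 : Fin 2) (1:ℂ) = 0 :=
      Matrix.single_mul_single_of_ne (1:ℂ) (0 : Fin 2) (1 : Fin 2) (0 : Fin 2) (by decide) (1:ℂ)
    rw [h]; rfl

noncomputable def psi : Qsl2 →ₐ[ℂ] (Matrix (Fin 2) (Fin 2) ℂ × ℂ) :=
  RingQuot.liftAlgHom ℂ ⟨psi0, psiRel⟩

lemma psi_q (u : Usl2) : psi (qmap u) = psi0 u :=
  RingQuot.liftAlgHom_mkAlgHom_apply ℂ psi0 psiRel u

noncomputable def bfam : Fin 4 → Qsl2 := ![1, EQ, HQ, FQ * EQ]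

lemma bfam_indep : LinearIndependent ℂ bfam := by
  apply LinearIndependent.of_comp psi.toLinearMap
  rw [Fintype.linearIndependent_iff]
  intro g hg
  have h1 : psi (bfam 0) = (1, 1) := by
    show psi 1 = _
    rw [map_one]; rfl
  have h2 : psi (bfam 1) = (Matrix.single 0 1 (1:ℂ), 0) := by
    show psi EQ = _
    rw [EQ, psi_q, psi0_iota]; rfl
  have h3 : psi (bfam 2) =
      (Matrix.single 0 0 (1:ℂ) - Matrix.single 1 1 (1:ℂ), 0) := by
    show psi HQ = _
    rw [HQ, psi_q, psi0_iota]; rfl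
  have h4 : psi (bfam 3) = (Matrix.single 1 1 (1:ℂ), 0) := by
    show psi (FQ * EQ) = _
    rw [map_mul, FQ, EQ, psi_q, psi_q, psi0_iota, psi0_iota, Prod.mk_mul_mk, mul_zero]
    show (Matrix.single 1 0 (1:ℂ) * Matrix.single 0 1 (1:ℂ), (0:ℂ)) = _
    rw [Matrix.single_mul_single_same, one_mul]
  rw [Fin.sum_univ_four] at hg
  simp only [Function.comp_apply, AlgHom.toLinearMap_apply] at hg
  rw [h1, h2, h3, h4] at hg
  rw [Prod.ext_iff] at hg
  obtain ⟨hm, hs⟩ := hg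
  simp only [Prod.smul_mk, Prod.mk_add_mk, smul_zero, smul_eq_mul, mul_one, mul_zero] at hm hs
  -- hs : g 0 = 0 (after simplification)
  have hg0 : g 0 = 0 := by
    simpa using hs
  have e01 := congrFun (congrFun hm 0) 1
  have e00 := congrFun (congrFun hm 0) 0
  have e11 := congrFun (congrFun hm 1) 1
  simp [Matrix.add_apply, Matrix.smul_apply, Matrix.sub_apply, Matrix.one_apply,
    Matrix.single, Matrix.of_apply, hg0] at e01 e00 e11
  have hg3 : g 3 = 0 := by rw [e00] at e11; simpa using e11
  intro i
  fin_cases i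
  · exact hg0
  · exact e01
  · exact e00
  · exact hg3
noncomputable def Sset : Set Qsl2 := {1, EQ, HQ, FQ * EQ}
noncomputable def Pspan : Submodule ℂ Qsl2 := Submodule.span ℂ Sset

lemma hP1 : (1 : Qsl2) ∈ Pspan := Submodule.subset_span (by simp [Sset])
lemma hPE : EQ ∈ Pspan := Submodule.subset_span (by simp [Sset])
lemma hPH : HQ ∈ Pspan := Submodule.subset_span (by simp [Sset])
lemma hPFE : FQ * EQ ∈ Pspan := Submodule.subset_span (by simp [Sset])

open Pointwise in
lemma Pmul {p q : Qsl2} (hp : p ∈ Pspan) (hq : q ∈ Pspan) : p * q ∈ Pspan := by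
  have hSS : Sset * Sset ⊆ (Pspan : Set Qsl2) := by
    intro z hz
    rw [Set.mem_mul] at hz
    obtain ⟨a, ha, b, hb, rfl⟩ := hz
    simp only [Sset, Set.mem_insert_iff, Set.mem_singleton_iff] at ha hb
    rcases ha with rfl | rfl | rfl | rfl <;> rcases hb with rfl | rfl | rfl | rfl <;>
      simp only [one_mul, mul_one, qE2, qEH, qEFE, qHEe, qHH, qHFE, qFEE, qFEH, qFEFE,
        SetLike.mem_coe] <;>
      first
        | exact hP1 | exact hPE | exact hPH | exact hPFE
        | exact zero_mem _
        | exact neg_mem hPE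
        | exact neg_mem hPFE
        | exact add_mem (add_mem hPH hPFE) hPFE
  have h1 : p * q ∈ Pspan * Pspan := Submodule.mul_mem_mul hp hq
  have h2 : Pspan * Pspan ≤ Pspan := by
    rw [Pspan, Submodule.span_mul_span]
    exact Submodule.span_le.mpr hSS
  exact h2 h1

lemma range_subset : (phi.range : Set Qsl2) ⊆ (Pspan : Set Qsl2) := by
  rintro z hz
  rw [SetLike.mem_coe, AlgHom.mem_range] at hz
  obtain ⟨a, rfl⟩ := hz
  obtain ⟨w, rfl⟩ := RingQuot.mkAlgHom_surjective ℂ relA1 a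
  rw [phi_mk]
  induction w using FreeAlgebra.induction with
  | grade0 r =>
    rw [AlgHom.commutes, Algebra.algebraMap_eq_smul_one]
    exact Submodule.smul_mem _ r hP1
  | grade1 i =>
    fin_cases i
    · show fFree Xgen ∈ (Pspan : Set Qsl2)
      rw [fX]; exact hPH
    · show fFree Ygen ∈ (Pspan : Set Qsl2)
      rw [fY]; exact hPE
  | mul a b ha hb => rw [map_mul]; exact Pmul ha hb
  | add a b ha hb => rw [map_add]; exact add_mem ha hb
lemma FE_smul : FQ * EQ = (2:ℂ)⁻¹ • (HQ * HQ - HQ) := by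
  rw [qHH]
  rw [show HQ + FQ * EQ + FQ * EQ - HQ = FQ * EQ + FQ * EQ by abel]
  rw [← two_smul ℂ (FQ * EQ), smul_smul]
  norm_num

lemma FE_mem_range : FQ * EQ ∈ phi.range := by
  refine ⟨(2:ℂ)⁻¹ • (xA1 * xA1 - xA1), ?_⟩
  show phi ((2:ℂ)⁻¹ • (xA1 * xA1 - xA1)) = FQ * EQ
  rw [map_smul phi, map_sub, map_mul, phiX, ← FE_smul]

lemma span_subset : (Pspan : Set Qsl2) ⊆ (phi.range : Set Qsl2) := by
  have h : Pspan ≤ Subalgebra.toSubmodule phi.range := by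
    rw [Pspan]
    apply Submodule.span_le.mpr
    intro z hz
    simp only [Sset, Set.mem_insert_iff, Set.mem_singleton_iff] at hz
    rcases hz with rfl | rfl | rfl | rfl
    · exact Subalgebra.one_mem _
    · exact ⟨yA1, phiY⟩
    · exact ⟨xA1, phiX⟩
    · exact FE_mem_range
  exact h

lemma range_bfam : Set.range bfam = Sset := by
  rw [bfam, Sset]
  simp only [Matrix.range_cons, Matrix.range_empty, Set.union_empty, Set.union_singleton]
  apply Set.Subset.antisymm <;> intro z hz <;> simp at hz ⊢ <;> tauto

lemma finrank_four : Module.finrank ℂ (Submodule.span ℂ Sset) = 4 := by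
  rw [← range_bfam]
  rw [finrank_span_eq_card bfam_indep]
  simp

/-- there is a `ℂ`-algebra homomorphism `φ : A₁ → U(sl₂(ℂ))/I` with
`φ(x) = [ι(h)]` and `φ(y) = [ι(e)]`; its image is the `ℂ`-span of the classes of
`1, ι(e), ι(h), ι(f)·ι(e)`, which is a four-dimensional subalgebra. -/
theorem stmt5 :
    ∃ φ : A1 →ₐ[ℂ] Qsl2,
      φ xA1 = qmap (iotaU Hsl) ∧
      φ yA1 = qmap (iotaU Esl) ∧
      (φ.range : Set Qsl2) =
        (Submodule.span ℂ ({1, qmap (iotaU Esl), qmap (iotaU Hsl),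
          qmap (iotaU Fsl) * qmap (iotaU Esl)} : Set Qsl2) : Set Qsl2) ∧
      Module.finrank ℂ (Submodule.span ℂ ({1, qmap (iotaU Esl), qmap (iotaU Hsl),
          qmap (iotaU Fsl) * qmap (iotaU Esl)} : Set Qsl2)) = 4 := by
  refine ⟨phi, phiX, phiY, ?_, ?_⟩
  · show (phi.range : Set Qsl2) = (Submodule.span ℂ Sset : Set Qsl2)
    exact Set.Subset.antisymm range_subset span_subset
  · show Module.finrank ℂ (Submodule.span ℂ Sset) = 4
    exact finrank_four
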